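/- arXiv:1903.03385 — 3 statements merged into one kernel-verified Lean document; each statement's English description precedes it below -/
import Mathlib

section
/- Let G be an ordered graph on vertex set {0, ..., N−1} and let k > k' > 0 be integers. Let 0 = b_0 ≤ m_0 ≤ b_1 ≤ m_1 ≤ ... ≤ b_k = N be a k-partition of G and let 0 = b'_0 ≤ m'_0 ≤ b'_1 ≤ m'_1 ≤ ... ≤ b'_{k'} = N be a k'-partition of G. Then there exist at least k − k' distinct indices i ∈ {0, ..., k−1} such that E(b_i, m_i, b_{i+1}) is disjoint from the union over j ∈ {0, ..., k'−1} of E(b'_j, m'_j, b'_{j+1}). -/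
/-- An ordered graph on vertex set `{0, ..., N-1}`: every edge `(u, v)` satisfies
`u < v` and `v < N`. -/
def IsOrderedGraph (N : ℕ) (E : Finset (ℕ × ℕ)) : Prop :=
  ∀ e ∈ E, e.1 < e.2 ∧ e.2 < N

/-- `E(a, m, b)`: the set of edges `(u, v) ∈ E` with `a ≤ u < m` and `m ≤ v < b`. -/
def edgesBetween (E : Finset (ℕ × ℕ)) (a m b : ℕ) : Finset (ℕ × ℕ) :=
  E.filter fun e => a ≤ e.1 ∧ e.1 < m ∧ m ≤ e.2 ∧ e.2 < b

/-- A `k`-partition of an ordered graph on `{0, ..., N-1}`: a sequence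
`0 = b_0 ≤ m_0 ≤ b_1 ≤ m_1 ≤ ⋯ ≤ m_{k-1} ≤ b_k = N`. -/
def IsPartition (N k : ℕ) (b m : ℕ → ℕ) : Prop :=
  b 0 = 0 ∧ b k = N ∧ ∀ i < k, b i ≤ m i ∧ m i ≤ b (i + 1)

theorem stmt_0 (N k k' : ℕ) (E : Finset (ℕ × ℕ)) (hE : IsOrderedGraph N E)
    (hk' : 0 < k') (hkk' : k' < k)
    (b m b' m' : ℕ → ℕ)
    (hP : IsPartition N k b m) (hP' : IsPartition N k' b' m') :
    ∃ S : Finset ℕ, S ⊆ Finset.range k ∧ k - k' ≤ S.card ∧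
      ∀ i ∈ S, Disjoint (edgesBetween E (b i) (m i) (b (i + 1)))
        ((Finset.range k').biUnion fun j =>
          edgesBetween E (b' j) (m' j) (b' (j + 1))) := by
  classical
  obtain ⟨hb0, hbk, hbm⟩ := hP
  have hmono : ∀ s t, s ≤ t → t ≤ k → b s ≤ b t := by
    intro s t
    induction t with
    | zero => intro h _; rw [Nat.le_zero.mp h]
    | succ n ih =>
      intro hst hnk
      rcases Nat.lt_succ_iff_lt_or_eq.mp (Nat.lt_succ_of_le hst) with h | h
      · have h1 : b s ≤ b n := ih (by omega) (by omega)
        have h2 := hbm n (by omega)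
        omega
      · exact le_of_eq (congrArg b h)
  set D := ((Finset.range k').biUnion fun j =>
      edgesBetween E (b' j) (m' j) (b' (j + 1))) with hD
  set Bad := (Finset.range k).filter
      (fun i => ¬ Disjoint (edgesBetween E (b i) (m i) (b (i + 1))) D) with hBad
  have hchoice : ∀ i, ∃ j, i ∈ Bad → j < k' ∧ ∃ e ∈ E,
      b i ≤ e.1 ∧ e.1 < m i ∧ m i ≤ e.2 ∧ e.2 < b (i + 1) ∧
      b' j ≤ e.1 ∧ e.1 < m' j ∧ m' j ≤ e.2 ∧ e.2 < b' (j + 1) := by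
    intro i
    by_cases hi : i ∈ Bad
    · simp only [hBad, Finset.mem_filter] at hi
      obtain ⟨e, he1, he2⟩ := Finset.not_disjoint_iff.mp hi.2
      simp only [hD, Finset.mem_biUnion, Finset.mem_range, edgesBetween,
        Finset.mem_filter] at he1 he2
      obtain ⟨j, hj, hje⟩ := he2
      exact ⟨j, fun _ => ⟨hj, e, he1.1, he1.2.1, he1.2.2.1, he1.2.2.2.1, he1.2.2.2.2,
        hje.2.1, hje.2.2.1, hje.2.2.2.1, hje.2.2.2.2⟩⟩
    · exact ⟨0, fun h => absurd h hi⟩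
  choose f hf using hchoice
  have hBadlt : ∀ i ∈ Bad, i < k := by
    intro i hi
    simp only [hBad, Finset.mem_filter, Finset.mem_range] at hi
    exact hi.1
  have hsub : Bad ⊆ Finset.range k := hBad ▸ Finset.filter_subset _ _
  have hinj : Set.InjOn f Bad := by
    intro i1 hi1 i2 hi2 heq
    replace hi1 := Finset.mem_coe.mp hi1
    replace hi2 := Finset.mem_coe.mp hi2
    by_contra hne
    obtain ⟨hj1, e1, he1E, h1⟩ := hf i1 hi1
    obtain ⟨hj2, e2, he2E, h2⟩ := hf i2 hi2
    rcases Nat.lt_or_ge i1 i2 with h | h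
    · have hb12 : b (i1 + 1) ≤ b i2 := hmono _ _ (by omega) (le_of_lt (hBadlt i2 hi2))
      rw [heq] at h1
      omega
    · have hlt : i2 < i1 := by omega
      have hb21 : b (i2 + 1) ≤ b i1 := hmono _ _ (by omega) (le_of_lt (hBadlt i1 hi1))
      rw [heq] at h1
      omega
  have hcard : Bad.card ≤ k' := by
    calc Bad.card ≤ (Finset.range k').card :=
          Finset.card_le_card_of_injOn f (fun i hi => Finset.mem_range.mpr (hf i hi).1) hinj
      _ = k' := Finset.card_range k'
  refine ⟨Finset.range k \ Bad, Finset.sdiff_subset, ?_, ?_⟩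
  · rw [Finset.card_sdiff_of_subset hsub, Finset.card_range]
    omega
  · intro i hi
    rw [Finset.mem_sdiff] at hi
    have := hi.2
    simp only [hBad, Finset.mem_filter, hi.1, true_and, not_not] at this
    exact this
end

section
/- Let K be a finite set of natural numbers each of which is a power of 4, let ℓ be a natural number, and let G be an ordered graph on vertex set {0, ..., N−1} such that for every k ∈ K, G has a k-partition each of whose parts contains at least ℓ/k edges (i.e., k · |E(b_i, m_i, b_{i+1})| ≥ ℓ for every i ∈ {0, ..., k−1}). Then G has at least (ℓ/2) · |K| edges, i.e., 2 · |E| ≥ ℓ · |K|. -/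
private lemma aux_geom (n : ℕ) : 3 * ∑ j ∈ Finset.range n, 4 ^ j + 1 = 4 ^ n := by
  induction n with
  | zero => simp
  | succ n ih => rw [Finset.sum_range_succ, pow_succ]; omega

private lemma aux_mono {k : ℕ} {b m : ℕ → ℕ} (h : ∀ i < k, b i ≤ m i ∧ m i ≤ b (i + 1)) :
    ∀ q, q ≤ k → ∀ p, p ≤ q → b p ≤ b q := by
  intro q
  induction q with
  | zero =>
    intro _ p hp
    have hp0 : p = 0 := Nat.le_zero.mp hp
    rw [hp0]
  | succ q ih =>
    intro hq p hp
    rcases Nat.eq_or_lt_of_le hp with rfl | hlt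
    · exact le_rfl
    · have hpq : p ≤ q := Nat.lt_succ_iff.mp hlt
      have h1 := ih (by omega) p hpq
      have h2 := h q (by omega)
      omega

private lemma aux_sum_pows (S : Finset ℕ) (h : ∀ k ∈ S, ∃ j, k = 4 ^ j) (J : ℕ)
    (hlt : ∀ k ∈ S, k < 4 ^ J) : 3 * (∑ k ∈ S, k) < 4 ^ J := by
  have hsub : S ⊆ (Finset.range J).image (4 ^ ·) := by
    intro k hk
    obtain ⟨j, rfl⟩ := h k hk
    have hj : j < J := (Nat.pow_lt_pow_iff_right (by norm_num)).mp (hlt _ hk)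
    exact Finset.mem_image.mpr ⟨j, Finset.mem_range.mpr hj, rfl⟩
  have h1 : ∑ k ∈ S, k ≤ ∑ k ∈ (Finset.range J).image (4 ^ ·), k :=
    Finset.sum_le_sum_of_subset hsub
  have h2 : ∑ k ∈ (Finset.range J).image (4 ^ ·), k = ∑ j ∈ Finset.range J, 4 ^ j := by
    rw [Finset.sum_image]
    intro x _ y _ hxy
    exact Nat.pow_right_injective (by norm_num) hxy
  have h3 := aux_geom J
  omega

theorem stmt_1 (N ℓ : ℕ) (E : Finset (ℕ × ℕ)) (hE : IsOrderedGraph N E)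
    (K : Finset ℕ) (hK : ∀ k ∈ K, ∃ j : ℕ, k = 4 ^ j)
    (hpart : ∀ k ∈ K, ∃ b m : ℕ → ℕ, IsPartition N k b m ∧
      ∀ i < k, ℓ ≤ k * (edgesBetween E (b i) (m i) (b (i + 1))).card) :
    ℓ * K.card ≤ 2 * E.card := by
  classical
  set s : ℕ → ℕ := fun k => (ℓ + k - 1) / k with hs
  have hs_le : ∀ k c : ℕ, 0 < k → ℓ ≤ k * c → s k ≤ c := by
    intro k c hk h
    have h2 : (c + 1) * k = k * c + k := by ring
    have h3 : ℓ + k - 1 < (c + 1) * k := by omega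
    exact Nat.lt_succ_iff.mp ((Nat.div_lt_iff_lt_mul hk).mpr h3)
  have hs_ge : ∀ k : ℕ, 0 < k → ℓ ≤ k * s k := by
    intro k hk
    have h1 := Nat.div_add_mod (ℓ + k - 1) k
    have h2 : (ℓ + k - 1) % k < k := Nat.mod_lt _ hk
    simp only [hs]
    omega
  have hK1 : ∀ k ∈ K, 0 < k := by
    intro k hk; obtain ⟨j, rfl⟩ := hK k hk; positivity
  -- choose partitions
  have hex : ∀ k : ℕ, ∃ b : ℕ → ℕ, ∃ m : ℕ → ℕ, k ∈ K →
      (∀ i < k, b i ≤ m i ∧ m i ≤ b (i + 1)) ∧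
      ∀ i < k, ℓ ≤ k * (edgesBetween E (b i) (m i) (b (i + 1))).card := by
    intro k
    by_cases hk : k ∈ K
    · obtain ⟨b, m, hp, hc⟩ := hpart k hk
      exact ⟨b, m, fun _ => ⟨hp.2.2, hc⟩⟩
    · exact ⟨id, id, fun h => absurd h hk⟩
  choose b m hbm using hex
  -- choose trimmed edge sets
  have hexT : ∀ k i : ℕ, ∃ Tki : Finset (ℕ × ℕ), k ∈ K → i < k →
      Tki ⊆ edgesBetween E (b k i) (m k i) (b k (i + 1)) ∧ Tki.card = s k := by
    intro k i
    by_cases hk : k ∈ K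
    · by_cases hi : i < k
      · have hc := (hbm k hk).2 i hi
        have hle : s k ≤ (edgesBetween E (b k i) (m k i) (b k (i + 1))).card :=
          hs_le _ _ (hK1 k hk) hc
        obtain ⟨T, hT1, hT2⟩ := Finset.exists_subset_card_eq hle
        exact ⟨T, fun _ _ => ⟨hT1, hT2⟩⟩
      · exact ⟨∅, fun _ h => absurd h hi⟩
    · exact ⟨∅, fun h => absurd h hk⟩
  choose T hT using hexT
  set Tk : ℕ → Finset (ℕ × ℕ) := fun k => (Finset.range k).biUnion (T k) with hTkdef
  have hTmem : ∀ k ∈ K, ∀ i < k, ∀ e ∈ T k i,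
      e ∈ E ∧ b k i ≤ e.1 ∧ e.1 < m k i ∧ m k i ≤ e.2 ∧ e.2 < b k (i + 1) := by
    intro k hk i hi e he
    have h := (hT k i hk hi).1 he
    simpa [edgesBetween, Finset.mem_filter] using h
  have huniq : ∀ k' ∈ K, ∀ x : ℕ, ∀ i' i'', i' < k' → i'' < k' →
      b k' i' < x → x < b k' (i' + 1) → b k' i'' < x → x < b k' (i'' + 1) → i' = i'' := by
    intro k' hk' x i' i'' h1 h2 h3 h4 h5 h6
    by_contra hne
    have hmono := (hbm k' hk').1
    rcases Nat.lt_or_ge i' i'' with hlt | hge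
    · have := aux_mono hmono i'' (by omega) (i' + 1) (by omega)
      omega
    · have hlt : i'' < i' := by omega
      have := aux_mono hmono i' (by omega) (i'' + 1) (by omega)
      omega
  have hcardTk : ∀ k ∈ K, (Tk k).card = k * s k := by
    intro k hk
    have hd : ∀ i ∈ Finset.range k, ∀ j ∈ Finset.range k, i ≠ j →
        Disjoint (T k i) (T k j) := by
      intro i hi j hj hij
      rw [Finset.disjoint_left]
      intro e hei hej
      have hik := Finset.mem_range.mp hi
      have hjk := Finset.mem_range.mp hj
      have h1 := hTmem k hk i hik e hei
      have h2 := hTmem k hk j hjk e hej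
      have hmono := (hbm k hk).1
      rcases Nat.lt_or_ge i j with hlt | hge
      · have := aux_mono hmono j (by omega) (i + 1) (by omega)
        omega
      · have hlt : j < i := by omega
        have := aux_mono hmono i (by omega) (j + 1) (by omega)
        omega
    rw [hTkdef]
    rw [Finset.card_biUnion hd]
    rw [Finset.sum_congr rfl (fun i hi => (hT k i hk (Finset.mem_range.mp hi)).2)]
    simp [Finset.sum_const, Finset.card_range, mul_comm]
  have hcross : ∀ k ∈ K, ∀ k' ∈ K, k < k' → (Tk k ∩ Tk k').card ≤ k * s k' := by
    intro k hk k' hk' hlt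
    have hsub : Tk k ∩ Tk k' ⊆ (Finset.range k).biUnion (fun i => T k i ∩ Tk k') := by
      intro e he
      rw [Finset.mem_inter] at he
      obtain ⟨he1, he2⟩ := he
      rw [hTkdef] at he1
      obtain ⟨i, hi, hei⟩ := Finset.mem_biUnion.mp he1
      exact Finset.mem_biUnion.mpr ⟨i, hi, Finset.mem_inter.mpr ⟨hei, he2⟩⟩
    calc (Tk k ∩ Tk k').card
        ≤ ((Finset.range k).biUnion (fun i => T k i ∩ Tk k')).card :=
          Finset.card_le_card hsub
      _ ≤ ∑ i ∈ Finset.range k, (T k i ∩ Tk k').card := Finset.card_biUnion_le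
      _ ≤ ∑ i ∈ Finset.range k, s k' := by
          apply Finset.sum_le_sum
          intro i hi
          have hik := Finset.mem_range.mp hi
          rcases (T k i ∩ Tk k').eq_empty_or_nonempty with heq | ⟨e, he⟩
          · simp [heq]
          · rw [Finset.mem_inter] at he
            obtain ⟨he1, he2⟩ := he
            rw [hTkdef] at he2
            obtain ⟨i₀, hi₀, hei₀⟩ := Finset.mem_biUnion.mp he2
            have hi₀k := Finset.mem_range.mp hi₀
            have hsub2 : T k i ∩ Tk k' ⊆ T k' i₀ := by
              intro f hf
              rw [Finset.mem_inter] at hf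
              obtain ⟨hf1, hf2⟩ := hf
              rw [hTkdef] at hf2
              obtain ⟨i₁, hi₁, hfi₁⟩ := Finset.mem_biUnion.mp hf2
              have hi₁k := Finset.mem_range.mp hi₁
              have hfk := hTmem k hk i hik f hf1
              have hfk' := hTmem k' hk' i₁ hi₁k f hfi₁
              have hek := hTmem k hk i hik e he1
              have hek' := hTmem k' hk' i₀ hi₀k e hei₀
              have : i₁ = i₀ := by
                apply huniq k' hk' (m k i) i₁ i₀ hi₁k hi₀k <;> omega
              rwa [← this]
            calc (T k i ∩ Tk k').card ≤ (T k' i₀).card := Finset.card_le_card hsub2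
              _ = s k' := (hT k' i₀ hk' hi₀k).2
      _ = k * s k' := by simp [Finset.sum_const, Finset.card_range, mul_comm]
  -- main induction over subsets of K
  have key : ∀ S : Finset ℕ, S ⊆ K → 2 * (ℓ * S.card) ≤ 3 * (S.biUnion Tk).card := by
    intro S
    induction S using Finset.strongInduction with
    | _ S ih =>
      intro hSK
      rcases S.eq_empty_or_nonempty with rfl | hne
      · simp
      set k' := S.max' hne with hk'def
      have hk'S : k' ∈ S := S.max'_mem hne
      have hk'K : k' ∈ K := hSK hk'S
      set S' := S.erase k' with hS'def
      have hih := ih S' (Finset.erase_ssubset hk'S)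
        (fun x hx => hSK (Finset.mem_of_mem_erase hx))
      obtain ⟨J, hJ⟩ := hK k' hk'K
      have hsum : 3 * (∑ k ∈ S', k) < k' := by
        rw [hJ]
        apply aux_sum_pows
        · intro k hk; exact hK k (hSK (Finset.mem_of_mem_erase hk))
        · intro k hk
          rw [← hJ]
          exact lt_of_le_of_ne (S.le_max' k (Finset.mem_of_mem_erase hk))
            (Finset.ne_of_mem_erase hk)
      have hX : (Tk k' ∩ S'.biUnion Tk).card ≤ (∑ k ∈ S', k) * s k' := by
        have hsub : Tk k' ∩ S'.biUnion Tk ⊆ S'.biUnion (fun k => Tk k ∩ Tk k') := by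
          intro e he
          rw [Finset.mem_inter] at he
          obtain ⟨he1, he2⟩ := he
          obtain ⟨k, hkS', hek⟩ := Finset.mem_biUnion.mp he2
          exact Finset.mem_biUnion.mpr ⟨k, hkS', Finset.mem_inter.mpr ⟨hek, he1⟩⟩
        calc (Tk k' ∩ S'.biUnion Tk).card
            ≤ (S'.biUnion (fun k => Tk k ∩ Tk k')).card := Finset.card_le_card hsub
          _ ≤ ∑ k ∈ S', (Tk k ∩ Tk k').card := Finset.card_biUnion_le
          _ ≤ ∑ k ∈ S', k * s k' := by
              apply Finset.sum_le_sum
              intro k hk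
              have hkK : k ∈ K := hSK (Finset.mem_of_mem_erase hk)
              have hklt : k < k' := lt_of_le_of_ne
                (S.le_max' k (Finset.mem_of_mem_erase hk)) (Finset.ne_of_mem_erase hk)
              exact hcross k hkK k' hk'K hklt
          _ = (∑ k ∈ S', k) * s k' := by rw [Finset.sum_mul]
      have h3X : 3 * (Tk k' ∩ S'.biUnion Tk).card ≤ k' * s k' := by
        calc 3 * (Tk k' ∩ S'.biUnion Tk).card
            ≤ 3 * ((∑ k ∈ S', k) * s k') := by omega
          _ = (3 * ∑ k ∈ S', k) * s k' := by ring
          _ ≤ k' * s k' := Nat.mul_le_mul_right _ (le_of_lt hsum)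
      have hℓ : ℓ ≤ k' * s k' := hs_ge k' (hK1 k' hk'K)
      have hcard : (Tk k').card = k' * s k' := hcardTk k' hk'K
      have hsplit : (Tk k' \ S'.biUnion Tk).card + (Tk k' ∩ S'.biUnion Tk).card
          = (Tk k').card := Finset.card_sdiff_add_card_inter _ _
      have hunion : (Tk k' \ S'.biUnion Tk).card + (S'.biUnion Tk).card
          = (S.biUnion Tk).card := by
        rw [Finset.card_sdiff_add_card]
        congr 1
        conv_rhs => rw [← Finset.insert_erase hk'S]
        rw [Finset.biUnion_insert]
      have hScard : S.card = S'.card + 1 := by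
        rw [hS'def, Finset.card_erase_of_mem hk'S]
        have := Finset.card_pos.mpr hne
        omega
      have hgoal : ℓ * S.card = ℓ * S'.card + ℓ := by rw [hScard]; ring
      omega
  have hkey := key K (Finset.Subset.refl K)
  have hEsub : K.biUnion Tk ⊆ E := by
    intro e he
    obtain ⟨k, hkK, hek⟩ := Finset.mem_biUnion.mp he
    obtain ⟨i, hi, hei⟩ := Finset.mem_biUnion.mp hek
    exact (hTmem k hkK i (Finset.mem_range.mp hi) e hei).1
  have hle := Finset.card_le_card hEsub
  omega
end

section
/- Let ℓ, s, t be natural numbers with s ≤ t and let p ∈ [0, 1] be a real number. Let G be a random ordered graph (a random variable on a probability space taking values in ordered graphs) such that for every integer k with s ≤ k ≤ t, with probability at least p the graph G has a k-partition each of whose parts contains at least ℓ/k edges (i.e., k · |E(b_i, m_i, b_{i+1})| ≥ ℓ for every part). Then the expected number of edges of G is at least (p·ℓ/2) · (⌊log_4 t⌋ − ⌈log_4 s⌉). -/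
/-!
Only the scales `k = 4 ^ n` with `⌈log₄ s⌉ ≤ n < ⌊log₄ t⌋` are used. Fix an outcome and the
scales at which it has a dense partition. Call a part at scale `4 ^ n` clean if no cut point `m_i`
of a partition at a smaller scale lies strictly inside it. The smaller scales have fewer than
`4 ^ n / 2` cut points in total and each lies inside at most one part, so more than half of the
parts are clean, and they carry at least `ℓ / 2` edges. An edge of a part at a smaller scale
straddles that part's cut point, so it lies in no clean part: the clean edges of different scales
are disjoint, and the graph has at least `ℓ / 2` edges per scale at which it has a dense
partition. Each scale has such a partition with probability at least `p`.
-/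

open Finset

lemma fst_mem_Ico_of_mem_edgesBetween {E : Finset (ℕ × ℕ)} {a x c : ℕ} {e : ℕ × ℕ}
    (he : e ∈ edgesBetween E a x c) : e.1 ∈ Set.Ico a c := by
  simp only [edgesBetween, mem_filter] at he
  exact ⟨he.2.1, by omega⟩

lemma mem_Ioo_of_mem_edgesBetween {E : Finset (ℕ × ℕ)} {a x c a' x' c' : ℕ} {e : ℕ × ℕ}
    (he : e ∈ edgesBetween E a x c) (he' : e ∈ edgesBetween E a' x' c') : x ∈ Set.Ioo a' c' := by
  simp only [edgesBetween, mem_filter] at he he'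
  exact ⟨by omega, by omega⟩

namespace IsPartition

variable {N k : ℕ} {b m : ℕ → ℕ}

lemma monotoneOn (h : IsPartition N k b m) : MonotoneOn b (Set.Iic k) :=
  monotoneOn_of_le_succ Set.ordConnected_Iic fun i _ _ hi => by
    rw [Order.succ_eq_add_one] at hi ⊢
    have := h.2.2 i (by rw [Set.mem_Iic] at hi; omega)
    omega

lemma eq_of_mem_Ico (h : IsPartition N k b m) {i₁ i₂ x : ℕ} (hi₁ : i₁ < k) (hi₂ : i₂ < k)
    (hx₁ : x ∈ Set.Ico (b i₁) (b (i₁ + 1))) (hx₂ : x ∈ Set.Ico (b i₂) (b (i₂ + 1))) :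
    i₁ = i₂ := by
  by_contra hne
  wlog hlt : i₁ < i₂ generalizing i₁ i₂
  · exact this hi₂ hi₁ hx₂ hx₁ (Ne.symm hne) (by omega)
  have := h.monotoneOn (Set.mem_Iic.2 (show i₁ + 1 ≤ k by omega)) (Set.mem_Iic.2 hi₂.le) hlt
  simp only [Set.mem_Ico] at hx₁ hx₂
  omega

lemma pairwiseDisjoint_edgesBetween (h : IsPartition N k b m) (E : Finset (ℕ × ℕ)) :
    (range k : Set ℕ).PairwiseDisjoint fun i => edgesBetween E (b i) (m i) (b (i + 1)) := by
  intro i₁ hi₁ i₂ hi₂ hne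
  refine Finset.disjoint_left.2 fun e he₁ he₂ => hne ?_
  simp only [coe_range, Set.mem_Iio] at hi₁ hi₂
  exact h.eq_of_mem_Ico hi₁ hi₂ (fst_mem_Ico_of_mem_edgesBetween he₁)
    (fst_mem_Ico_of_mem_edgesBetween he₂)

end IsPartition

section Scales

variable (E : Finset (ℕ × ℕ)) (k : ℕ → ℕ) (b m : ℕ → ℕ → ℕ) (S : Finset ℕ)

def earlierCuts (j : ℕ) : Finset ℕ :=
  {j' ∈ S | j' < j}.biUnion fun j' => (range (k j')).image (m j')

def cleanParts (j : ℕ) : Finset ℕ :=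
  {i ∈ range (k j) | ∀ x ∈ earlierCuts k m S j, x ∉ Set.Ioo (b j i) (b j (i + 1))}

def cleanEdges (j : ℕ) : Finset (ℕ × ℕ) :=
  (cleanParts k b m S j).biUnion fun i => edgesBetween E (b j i) (m j i) (b j (i + 1))

variable {k b m S}

lemma card_earlierCuts_le (j : ℕ) : #(earlierCuts k m S j) ≤ ∑ i ∈ range j, k i :=
  calc #(earlierCuts k m S j) ≤ ∑ j' ∈ S with j' < j, k j' :=
        card_biUnion_le.trans <| sum_le_sum fun _ _ => card_image_le.trans (card_range _).le
    _ ≤ ∑ i ∈ range j, k i :=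
        sum_le_sum_of_subset fun _ hj' => mem_range.2 (mem_filter.1 hj').2

lemma card_sdiff_cleanParts_le {N j : ℕ} (h : IsPartition N (k j) (b j) (m j)) :
    #(range (k j) \ cleanParts k b m S j) ≤ #(earlierCuts k m S j) := by
  have hsub : range (k j) \ cleanParts k b m S j ⊆ (earlierCuts k m S j).biUnion
      fun x => {i ∈ range (k j) | x ∈ Set.Ioo (b j i) (b j (i + 1))} := by
    intro i hi
    simp only [cleanParts, mem_sdiff, mem_filter, not_and, not_forall, not_not] at hi
    obtain ⟨x, hx, hxi⟩ := hi.2 hi.1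
    exact mem_biUnion.2 ⟨x, hx, mem_filter.2 ⟨hi.1, hxi⟩⟩
  refine (card_le_card hsub).trans ((card_biUnion_le_card_mul _ _ 1 fun x _ => ?_).trans_eq
    (mul_one _))
  refine card_le_one.2 fun i₁ hi₁ i₂ hi₂ => ?_
  simp only [mem_filter, mem_range] at hi₁ hi₂
  exact h.eq_of_mem_Ico hi₁.1 hi₂.1 (Set.Ioo_subset_Ico_self hi₁.2) (Set.Ioo_subset_Ico_self hi₂.2)

lemma le_two_mul_card_cleanEdges {N ℓ j : ℕ} (hk : 2 * ∑ i ∈ range j, k i < k j)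
    (h : IsPartition N (k j) (b j) (m j))
    (hdense : ∀ i < k j, ℓ ≤ k j * #(edgesBetween E (b j i) (m j i) (b j (i + 1)))) :
    ℓ ≤ 2 * #(cleanEdges E k b m S j) := by
  have hclean_sub : cleanParts k b m S j ⊆ range (k j) := filter_subset _ _
  have hcard_clean : k j < 2 * #(cleanParts k b m S j) := by
    have hsplit := card_sdiff_add_card_eq_card hclean_sub
    have hdirty := (card_sdiff_cleanParts_le h).trans (card_earlierCuts_le (S := S) j)
    rw [card_range] at hsplit
    omega
  have hsum : ℓ * #(cleanParts k b m S j) ≤ k j * #(cleanEdges E k b m S j) := by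
    rw [cleanEdges, card_biUnion ((h.pairwiseDisjoint_edgesBetween E).subset
      (coe_subset.2 hclean_sub)), mul_sum, mul_comm, ← smul_eq_mul]
    exact card_nsmul_le_sum _ _ _ fun i hi => hdense i (mem_range.1 (hclean_sub hi))
  refine Nat.le_of_mul_le_mul_left ?_ (show 0 < k j by omega)
  calc k j * ℓ ≤ 2 * #(cleanParts k b m S j) * ℓ := by gcongr
    _ = 2 * (ℓ * #(cleanParts k b m S j)) := by ring
    _ ≤ 2 * (k j * #(cleanEdges E k b m S j)) := by gcongr
    _ = k j * (2 * #(cleanEdges E k b m S j)) := by ring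

lemma disjoint_cleanEdges {j₁ j₂ : ℕ} (hj₁ : j₁ ∈ S) (hlt : j₁ < j₂) :
    Disjoint (cleanEdges E k b m S j₁) (cleanEdges E k b m S j₂) := by
  refine disjoint_left.2 fun e he₁ he₂ => ?_
  simp only [cleanEdges, mem_biUnion] at he₁ he₂
  obtain ⟨i₁, hi₁, he₁⟩ := he₁
  obtain ⟨i₂, hi₂, he₂⟩ := he₂
  have hcut : m j₁ i₁ ∈ earlierCuts k m S j₂ := mem_biUnion.2
    ⟨j₁, mem_filter.2 ⟨hj₁, hlt⟩, mem_image_of_mem _ (mem_filter.1 hi₁).1⟩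
  exact (mem_filter.1 hi₂).2 _ hcut (mem_Ioo_of_mem_edgesBetween he₁ he₂)

end Scales

def HasDensePartition (N k ℓ : ℕ) (E : Finset (ℕ × ℕ)) : Prop :=
  ∃ b m : ℕ → ℕ, IsPartition N k b m ∧ ∀ i < k, ℓ ≤ k * #(edgesBetween E (b i) (m i) (b (i + 1)))

theorem mul_card_le_two_mul_card_of_hasDensePartition {N ℓ : ℕ} {E : Finset (ℕ × ℕ)}
    {k : ℕ → ℕ} {S : Finset ℕ} (hk : ∀ j, 2 * ∑ i ∈ range j, k i < k j)
    (hS : ∀ j ∈ S, HasDensePartition N (k j) ℓ E) : ℓ * #S ≤ 2 * #E := by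
  choose! b m hpart hdense using hS
  have hdisj : (S : Set ℕ).PairwiseDisjoint (cleanEdges E k b m S) := by
    intro j₁ hj₁ j₂ hj₂ hne
    rcases Nat.lt_or_gt_of_ne hne with hlt | hlt
    · exact disjoint_cleanEdges E hj₁ hlt
    · exact (disjoint_cleanEdges E hj₂ hlt).symm
  have hsub : S.biUnion (cleanEdges E k b m S) ⊆ E := biUnion_subset.2 fun _ _ =>
    biUnion_subset.2 fun _ _ => filter_subset _ _
  calc ℓ * #S = ∑ _j ∈ S, ℓ := by rw [sum_const, smul_eq_mul, mul_comm]
    _ ≤ ∑ j ∈ S, 2 * #(cleanEdges E k b m S j) := sum_le_sum fun j hj =>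
        le_two_mul_card_cleanEdges E (hk j) (hpart j hj) (hdense j hj)
    _ = 2 * #(S.biUnion (cleanEdges E k b m S)) := by rw [card_biUnion hdisj, mul_sum]
    _ ≤ 2 * #E := Nat.mul_le_mul_left 2 (card_le_card hsub)

lemma two_mul_sum_range_pow_lt {b : ℕ} (hb : 3 ≤ b) (j : ℕ) :
    2 * ∑ i ∈ range j, b ^ i < b ^ j := by
  induction j with
  | zero => simp
  | succ j ih =>
    rw [sum_range_succ, pow_succ]
    nlinarith [Nat.mul_le_mul_left (b ^ j) hb]

open MeasureTheory Classical in
lemma mul_sum_measure_le_lintegral {Ω ι : Type*} [MeasurableSpace Ω] (μ : Measure Ω)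
    {K : Finset ι} {A : ι → Set Ω} (hA : ∀ i ∈ K, MeasurableSet (A i)) (c : ENNReal)
    {X : Ω → ENNReal} (hX : ∀ ω, c * #{i ∈ K | ω ∈ A i} ≤ X ω) :
    c * ∑ i ∈ K, μ (A i) ≤ ∫⁻ ω, X ω ∂μ := by
  calc c * ∑ i ∈ K, μ (A i) = ∫⁻ ω, c * ∑ i ∈ K, (A i).indicator 1 ω ∂μ := by
        have hmeas : ∀ i ∈ K, Measurable ((A i).indicator (1 : Ω → ENNReal)) :=
          fun i hi => measurable_one.indicator (hA i hi)
        rw [lintegral_const_mul _ (Finset.measurable_sum _ hmeas), lintegral_finsetSum _ hmeas]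
        exact congrArg (c * ·) (sum_congr rfl fun i hi => (lintegral_indicator_one (hA i hi)).symm)
    _ ≤ ∫⁻ ω, X ω ∂μ := lintegral_mono fun ω => by
        simp only [Set.indicator_apply, Pi.one_apply, sum_boole]
        exact hX ω

lemma pow_mem_Icc_of_mem_Ico_clog_log {b s t n : ℕ} (hb : 1 < b)
    (hn : n ∈ Ico (Nat.clog b s) (Nat.log b t)) : b ^ n ∈ Set.Icc s t := by
  rw [mem_Ico] at hn
  have ht : t ≠ 0 := by rintro rfl; simp at hn
  exact ⟨(Nat.clog_le_iff_le_pow hb).1 hn.1, Nat.pow_le_of_le_log ht hn.2.le⟩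

open Real in
lemma floor_logb_sub_ceil_logb_le_card_Ico (b s t : ℕ) :
    ((⌊logb b (t : ℝ)⌋ - ⌈logb b (s : ℝ)⌉ : ℤ) : ℝ) ≤ #(Ico (Nat.clog b s) (Nat.log b t)) := by
  rw [floor_logb_natCast t.cast_nonneg, ceil_logb_natCast s.cast_nonneg, Int.log_natCast,
    Int.clog_natCast, Nat.card_Ico]
  exact_mod_cast (show (Nat.log b t - Nat.clog b s : ℤ) ≤ (Nat.log b t - Nat.clog b s : ℕ) by omega)

open MeasureTheory Real in
theorem stmt_2_general {Ω : Type*} [MeasurableSpace Ω] (μ : Measure Ω) [IsProbabilityMeasure μ]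
    (ℓ s t : ℕ) (p : ℝ) (hp0 : 0 ≤ p)
    (G : Ω → Finset (ℕ × ℕ)) (N : Ω → ℕ)
    (hmeas : ∀ k, s ≤ k → k ≤ t → MeasurableSet {ω | ∃ b m : ℕ → ℕ,
      IsPartition (N ω) k b m ∧
      ∀ i < k, ℓ ≤ k * (edgesBetween (G ω) (b i) (m i) (b (i + 1))).card})
    (hprob : ∀ k, s ≤ k → k ≤ t → ENNReal.ofReal p ≤ μ {ω | ∃ b m : ℕ → ℕ,
      IsPartition (N ω) k b m ∧
      ∀ i < k, ℓ ≤ k * (edgesBetween (G ω) (b i) (m i) (b (i + 1))).card}) :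
    ENNReal.ofReal (p * ℓ / 2 * ((⌊logb 4 (t : ℝ)⌋ - ⌈logb 4 (s : ℝ)⌉ : ℤ) : ℝ))
      ≤ ∫⁻ ω, ((G ω).card : ENNReal) ∂μ := by
  set scales := Ico (Nat.clog 4 s) (Nat.log 4 t)
  have hscale (n : ℕ) (hn : n ∈ scales) : 4 ^ n ∈ Set.Icc s t :=
    pow_mem_Icc_of_mem_Ico_clog_log (by norm_num) hn
  have hedges : (ℓ : ENNReal) * ∑ n ∈ scales, μ {ω | HasDensePartition (N ω) (4 ^ n) ℓ (G ω)}
      ≤ ∫⁻ ω, 2 * ((G ω).card : ENNReal) ∂μ :=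
    mul_sum_measure_le_lintegral μ (fun n hn => hmeas _ (hscale n hn).1 (hscale n hn).2) _
      fun ω => by
        classical
        exact_mod_cast mul_card_le_two_mul_card_of_hasDensePartition (k := (4 ^ ·))
          (two_mul_sum_range_pow_lt (by norm_num)) fun n hn => (mem_filter.1 hn).2
  have hsum : #scales • ENNReal.ofReal p
      ≤ ∑ n ∈ scales, μ {ω | HasDensePartition (N ω) (4 ^ n) ℓ (G ω)} :=
    card_nsmul_le_sum _ _ _ fun n hn => hprob _ (hscale n hn).1 (hscale n hn).2
  have hlog := floor_logb_sub_ceil_logb_le_card_Ico (b := 4) s t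
  rw [Nat.cast_ofNat] at hlog
  calc ENNReal.ofReal (p * ℓ / 2 * ((⌊logb 4 (t : ℝ)⌋ - ⌈logb 4 (s : ℝ)⌉ : ℤ) : ℝ))
      ≤ ENNReal.ofReal (p * ℓ * #scales) / 2 := by
        rw [← ENNReal.ofReal_ofNat 2, ← ENNReal.ofReal_div_of_pos two_pos]
        gcongr ENNReal.ofReal ?_
        have := mul_le_mul_of_nonneg_left hlog (by positivity : 0 ≤ p * ℓ / 2)
        linarith
    _ = ℓ * (#scales • ENNReal.ofReal p) / 2 := by
        rw [ENNReal.ofReal_mul (by positivity), ENNReal.ofReal_mul hp0, nsmul_eq_mul]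
        simp only [ENNReal.ofReal_natCast]
        congr 1
        ring
    _ ≤ (∫⁻ ω, 2 * ((G ω).card : ENNReal) ∂μ) / 2 := by gcongr; exact le_trans (by gcongr) hedges
    _ = ∫⁻ ω, ((G ω).card : ENNReal) ∂μ := by
        rw [lintegral_const_mul' _ _ ENNReal.ofNat_ne_top, mul_comm,
          ENNReal.mul_div_cancel_right two_ne_zero ENNReal.ofNat_ne_top]

open MeasureTheory Real in
/-- A random ordered graph `G` (on vertex set `{0, ..., N ω - 1}`) such that for every
`s ≤ k ≤ t`, with probability at least `p` it has a `k`-partition each of whose parts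
contains at least `ℓ/k` edges, has expected number of edges at least
`(p·ℓ/2)·(⌊log₄ t⌋ − ⌈log₄ s⌉)`. -/
theorem stmt_2 {Ω : Type*} [MeasurableSpace Ω] (μ : Measure Ω) [IsProbabilityMeasure μ]
    (ℓ s t : ℕ) (hst : s ≤ t) (p : ℝ) (hp0 : 0 ≤ p) (hp1 : p ≤ 1)
    (G : Ω → Finset (ℕ × ℕ)) (N : Ω → ℕ)
    (hord : ∀ ω, IsOrderedGraph (N ω) (G ω))
    (hmeas : ∀ k, s ≤ k → k ≤ t → MeasurableSet {ω | ∃ b m : ℕ → ℕ,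
      IsPartition (N ω) k b m ∧
      ∀ i < k, ℓ ≤ k * (edgesBetween (G ω) (b i) (m i) (b (i + 1))).card})
    (hprob : ∀ k, s ≤ k → k ≤ t → ENNReal.ofReal p ≤ μ {ω | ∃ b m : ℕ → ℕ,
      IsPartition (N ω) k b m ∧
      ∀ i < k, ℓ ≤ k * (edgesBetween (G ω) (b i) (m i) (b (i + 1))).card}) :
    ENNReal.ofReal (p * ℓ / 2 * ((⌊logb 4 (t : ℝ)⌋ - ⌈logb 4 (s : ℝ)⌉ : ℤ) : ℝ))
      ≤ ∫⁻ ω, ((G ω).card : ENNReal) ∂μ :=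
  stmt_2_general μ ℓ s t p hp0 G N hmeas hprob
end
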